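/- Let M be a matching of G of size n/3, and let N be a set of edges of G such that: every edge of N either has both endpoints in V(M) lying in two distinct edges of M, or has exactly one endpoint in V(M); no edge of M contains an endpoint of more than one edge of N; no two edges of N share a vertex outside V(M); and every edge of M contains an endpoint of some edge of N. Then there exists a perfect 3-path packing P of G with w(P) ≥ w(M) + c(N). -/
import Mathlib


open Finset
open scoped Classical

namespace MW3PP

/-- A 3-path `xyz`: a path on three distinct vertices with middle vertex `y`. -/
structure P3 (V : Type*) where
  x : V
  y : V
  z : V
  hxy : x ≠ y
  hyz : y ≠ z
  hxz : x ≠ z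

variable {V : Type*} [Fintype V] [DecidableEq V]

/-- The vertex set of a 3-path. -/
def P3.verts (p : P3 V) : Finset V := {p.x, p.y, p.z}

/-- The two edges of a 3-path. -/
def P3.edges (p : P3 V) : Finset (Sym2 V) := {s(p.x, p.y), s(p.y, p.z)}

/-- The weight of a 3-path. -/
def P3.wt (w : Sym2 V → ℝ) (p : P3 V) : ℝ := w s(p.x, p.y) + w s(p.y, p.z)

/-- The total weight of a set of edges. -/
def ew (w : Sym2 V → ℝ) (F : Finset (Sym2 V)) : ℝ := ∑ e ∈ F, w e

/-- The total weight of a set of 3-paths. -/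
def pw (w : Sym2 V → ℝ) (P : Finset (P3 V)) : ℝ := ∑ p ∈ P, p.wt w

/-- `∑_{xyz ∈ S} max (w (xy)) (w (yz))`. -/
def maxSum (w : Sym2 V → ℝ) (S : Finset (P3 V)) : ℝ :=
  ∑ p ∈ S, max (w s(p.x, p.y)) (w s(p.y, p.z))

/-- A perfect 3-path packing: `n/3` pairwise vertex-disjoint 3-paths covering all vertices. -/
def IsPacking (P : Finset (P3 V)) : Prop :=
  P.card = Fintype.card V / 3 ∧
  (∀ p ∈ P, ∀ q ∈ P, p ≠ q → Disjoint p.verts q.verts) ∧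
  (∀ v : V, ∃ p ∈ P, v ∈ p.verts)

/-- A maximum-weight perfect 3-path packing. -/
def IsMaxPacking (w : Sym2 V → ℝ) (P : Finset (P3 V)) : Prop :=
  IsPacking P ∧ ∀ Q : Finset (P3 V), IsPacking Q → pw w Q ≤ pw w P

/-- A matching: a set of pairwise vertex-disjoint (non-loop) edges. -/
def IsMatching (M : Finset (Sym2 V)) : Prop :=
  (∀ e ∈ M, ¬ e.IsDiag) ∧
  ∀ e ∈ M, ∀ f ∈ M, e ≠ f → ∀ v : V, v ∈ e → v ∉ f

/-- A maximum-weight matching among all matchings of size `k`. -/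
def IsMaxMatchingOfSize (w : Sym2 V → ℝ) (k : ℕ) (M : Finset (Sym2 V)) : Prop :=
  IsMatching M ∧ M.card = k ∧
  ∀ M' : Finset (Sym2 V), IsMatching M' → M'.card = k → ew w M' ≤ ew w M

/-- `v ∈ V(M)` : vertex `v` is covered by the matching `M`. -/
def covered (M : Finset (Sym2 V)) (v : V) : Prop := ∃ e ∈ M, v ∈ e

/-- `e_u` : the edge of `M` containing `u` (junk value if there is none). -/
noncomputable def eMatch (M : Finset (Sym2 V)) (u : V) : Sym2 V :=
  if h : ∃ e ∈ M, u ∈ e then h.choose else s(u, u)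

/-- The cost `c` of an edge with respect to a matching `M`:
`c(uv) = w(uv) - min (w (e_u)) (w (e_v))` if both endpoints are covered by `M`,
and `c(uv) = w(uv)` otherwise. -/
noncomputable def cost (w : Sym2 V → ℝ) (M : Finset (Sym2 V)) : Sym2 V → ℝ :=
  Sym2.lift ⟨fun u v =>
    if covered M u ∧ covered M v then
      w s(u, v) - min (w (eMatch M u)) (w (eMatch M v))
    else w s(u, v), by
      intro u v
      dsimp only
      by_cases h : covered M u ∧ covered M v
      · rw [if_pos h, if_pos (show covered M v ∧ covered M u from ⟨h.2, h.1⟩),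
          Sym2.eq_swap, min_comm]
      · rw [if_neg h, if_neg (show ¬(covered M v ∧ covered M u) from fun h' => h ⟨h'.2, h'.1⟩),
          Sym2.eq_swap]⟩

/-- The total cost of a set of edges. -/
noncomputable def cw (w : Sym2 V → ℝ) (M F : Finset (Sym2 V)) : ℝ := ∑ e ∈ F, cost w M e

/-- The number of vertices of the 3-path `p` covered by `M`. -/
noncomputable def kcnt (M : Finset (Sym2 V)) (p : P3 V) : ℕ :=
  (p.verts.filter fun v => covered M v).card

/-- Exactly one of the two edges of `p` lies in `M`. -/
def exOne (M : Finset (Sym2 V)) (p : P3 V) : Prop :=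
  (s(p.x, p.y) ∈ M ∧ s(p.y, p.z) ∉ M) ∨ (s(p.x, p.y) ∉ M ∧ s(p.y, p.z) ∈ M)

def cls1 (M : Finset (Sym2 V)) (p : P3 V) : Prop := kcnt M p = 0
def cls2 (M : Finset (Sym2 V)) (p : P3 V) : Prop := kcnt M p = 1 ∧ ¬ covered M p.y
def cls3 (M : Finset (Sym2 V)) (p : P3 V) : Prop := kcnt M p = 1 ∧ covered M p.y
def cls4 (M : Finset (Sym2 V)) (p : P3 V) : Prop := kcnt M p = 2 ∧ ¬ covered M p.y
def cls5 (M : Finset (Sym2 V)) (p : P3 V) : Prop := kcnt M p = 2 ∧ covered M p.y ∧ exOne M p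
def cls6 (M : Finset (Sym2 V)) (p : P3 V) : Prop :=
  kcnt M p = 2 ∧ covered M p.y ∧ s(p.x, p.y) ∉ M ∧ s(p.y, p.z) ∉ M
def cls7 (M : Finset (Sym2 V)) (p : P3 V) : Prop := kcnt M p = 3 ∧ exOne M p
def cls8 (M : Finset (Sym2 V)) (p : P3 V) : Prop :=
  kcnt M p = 3 ∧ s(p.x, p.y) ∉ M ∧ s(p.y, p.z) ∉ M

/-- The subset of a set of 3-paths satisfying a predicate. -/
noncomputable def psel (P : Finset (P3 V)) (c : P3 V → Prop) : Finset (P3 V) := P.filter c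

/-- The set of all edges of the 3-paths in `S`. -/
def Esub (S : Finset (P3 V)) : Finset (Sym2 V) := S.biUnion P3.edges

/-- The heaviest edge of a 3-path (the edge `xy` in case of a tie). -/
noncomputable def heavy (w : Sym2 V → ℝ) (p : P3 V) : Sym2 V :=
  if w s(p.y, p.z) ≤ w s(p.x, p.y) then s(p.x, p.y) else s(p.y, p.z)

noncomputable def X1 (w : Sym2 V → ℝ) (P : Finset (P3 V)) (M : Finset (Sym2 V)) :
    Finset (Sym2 V) := (psel P (cls1 M)).image (heavy w)
noncomputable def X2 (P : Finset (P3 V)) (M : Finset (Sym2 V)) : Finset (Sym2 V) :=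
  (psel P (cls2 M)).image fun p => if covered M p.x then s(p.x, p.y) else s(p.y, p.z)
noncomputable def X3 (w : Sym2 V → ℝ) (P : Finset (P3 V)) (M : Finset (Sym2 V)) :
    Finset (Sym2 V) := (psel P (cls3 M)).image (heavy w)
noncomputable def X4 (w : Sym2 V → ℝ) (P : Finset (P3 V)) (M : Finset (Sym2 V)) :
    Finset (Sym2 V) := (psel P (cls4 M)).image (heavy w)
noncomputable def X5 (P : Finset (P3 V)) (M : Finset (Sym2 V)) : Finset (Sym2 V) :=
  (psel P (cls5 M)).image fun p => if s(p.x, p.y) ∈ M then s(p.y, p.z) else s(p.x, p.y)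
noncomputable def X6 (P : Finset (P3 V)) (M : Finset (Sym2 V)) : Finset (Sym2 V) :=
  (psel P (cls6 M)).image fun p => if covered M p.x then s(p.y, p.z) else s(p.x, p.y)
noncomputable def X7 (P : Finset (P3 V)) (M : Finset (Sym2 V)) : Finset (Sym2 V) :=
  (psel P (cls7 M)).image fun p => if s(p.x, p.y) ∈ M then s(p.y, p.z) else s(p.x, p.y)
noncomputable def X8 (w : Sym2 V → ℝ) (P : Finset (P3 V)) (M : Finset (Sym2 V)) :
    Finset (Sym2 V) := (psel P (cls8 M)).image (heavy w)

noncomputable def Y1 (w : Sym2 V → ℝ) (P : Finset (P3 V)) (M : Finset (Sym2 V)) :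
    Finset (Sym2 V) := Esub (psel P (cls1 M)) \ X1 w P M
noncomputable def Y2 (P : Finset (P3 V)) (M : Finset (Sym2 V)) : Finset (Sym2 V) :=
  Esub (psel P (cls2 M)) \ X2 P M
noncomputable def Y3 (w : Sym2 V → ℝ) (P : Finset (P3 V)) (M : Finset (Sym2 V)) :
    Finset (Sym2 V) := Esub (psel P (cls3 M)) \ X3 w P M
noncomputable def Y4 (w : Sym2 V → ℝ) (P : Finset (P3 V)) (M : Finset (Sym2 V)) :
    Finset (Sym2 V) := Esub (psel P (cls4 M)) \ X4 w P M
noncomputable def Y5 (P : Finset (P3 V)) (M : Finset (Sym2 V)) : Finset (Sym2 V) :=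
  Esub (psel P (cls5 M)) \ X5 P M
noncomputable def Y6 (P : Finset (P3 V)) (M : Finset (Sym2 V)) : Finset (Sym2 V) :=
  Esub (psel P (cls6 M)) \ X6 P M
noncomputable def Y7 (P : Finset (P3 V)) (M : Finset (Sym2 V)) : Finset (Sym2 V) :=
  Esub (psel P (cls7 M)) \ X7 P M
noncomputable def Y8 (w : Sym2 V → ℝ) (P : Finset (P3 V)) (M : Finset (Sym2 V)) :
    Finset (Sym2 V) := Esub (psel P (cls8 M)) \ X8 w P M

/-- An edge is a middle edge (w.r.t. `M`) if exactly one of its endpoints lies in `V(M)`. -/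
def isMiddle (M : Finset (Sym2 V)) (e : Sym2 V) : Prop :=
  ∃ u v : V, e = s(u, v) ∧ covered M u ∧ ¬ covered M v

/-- Two edges share a vertex. -/
def shares (e f : Sym2 V) : Prop := ∃ v, v ∈ e ∧ v ∈ f

/-- `g` is a middle edge of some 3-path in `S`. -/
def middleIn (M : Finset (Sym2 V)) (S : Finset (P3 V)) (g : Sym2 V) : Prop :=
  (∃ p ∈ S, g ∈ p.edges) ∧ isMiddle M g

/-- The 3-paths of `P` lying in classes 2, 3 or 4. -/
noncomputable def P234 (P : Finset (P3 V)) (M : Finset (Sym2 V)) : Finset (P3 V) :=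
  psel P fun p => cls2 M p ∨ cls3 M p ∨ cls4 M p

/-- `M_1`: edges of `M` sharing a vertex with at least one middle edge of a 3-path of `P*_6`. -/
noncomputable def Mset1 (P : Finset (P3 V)) (M : Finset (Sym2 V)) : Finset (Sym2 V) :=
  M.filter fun f => ∃ g, middleIn M (psel P (cls6 M)) g ∧ shares f g

/-- `M_2`: edges of `M` sharing a vertex with at least one middle edge, all middle edges met
belonging to 3-paths of `P*_2 ∪ P*_3 ∪ P*_4`. -/
noncomputable def Mset2 (P : Finset (P3 V)) (M : Finset (Sym2 V)) : Finset (Sym2 V) :=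
  M.filter fun f =>
    (∃ g, middleIn M P g ∧ shares f g) ∧
    ∀ g, middleIn M P g → shares f g → middleIn M (P234 P M) g

/-- `M_3 = M ∩ E(P*_7)`. -/
noncomputable def Mset3 (P : Finset (P3 V)) (M : Finset (Sym2 V)) : Finset (Sym2 V) :=
  M ∩ Esub (psel P (cls7 M))

/-- `M_4 = M ∩ E(P*_5)`. -/
noncomputable def Mset4 (P : Finset (P3 V)) (M : Finset (Sym2 V)) : Finset (Sym2 V) :=
  M ∩ Esub (psel P (cls5 M))

/-- The middle edges of 3-paths of `P*_6`. -/
noncomputable def mid6 (P : Finset (P3 V)) (M : Finset (Sym2 V)) : Finset (Sym2 V) :=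
  (Esub (psel P (cls6 M))).filter (isMiddle M)

/-- `M'_1`: edges of `M_1` meeting exactly one middle edge of a 3-path of `P*_6` and
no middle edge of a 3-path of `P*_2 ∪ P*_3 ∪ P*_4`. -/
noncomputable def Mset1' (P : Finset (P3 V)) (M : Finset (Sym2 V)) : Finset (Sym2 V) :=
  (Mset1 P M).filter fun f =>
    ((mid6 P M).filter fun g => shares f g).card = 1 ∧
    ∀ g, middleIn M (P234 P M) g → ¬ shares f g

/-- `M''_1`: edges of `M_1` meeting two middle edges of 3-paths of `P*_6`. -/
noncomputable def Mset1'' (P : Finset (P3 V)) (M : Finset (Sym2 V)) : Finset (Sym2 V) :=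
  (Mset1 P M).filter fun f => ((mid6 P M).filter fun g => shares f g).card = 2

/-- `M'''_1`: edges of `M_1` meeting exactly one middle edge of a 3-path of `P*_6` and
at least one middle edge of a 3-path of `P*_2 ∪ P*_3 ∪ P*_4`. -/
noncomputable def Mset1''' (P : Finset (P3 V)) (M : Finset (Sym2 V)) : Finset (Sym2 V) :=
  (Mset1 P M).filter fun f =>
    ((mid6 P M).filter fun g => shares f g).card = 1 ∧
    ∃ g, middleIn M (P234 P M) g ∧ shares f g

/-- Assumption on `P*`: for every 3-path `xyz ∈ P*` with `y ∉ V(M)` and `x, z ∈ V(M)`,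
the vertices `x` and `z` lie in two distinct edges of `M`. -/
def Ass (P : Finset (P3 V)) (M : Finset (Sym2 V)) : Prop :=
  ∀ p ∈ P, ¬ covered M p.y → covered M p.x → covered M p.z →
    ∃ e ∈ M, ∃ f ∈ M, p.x ∈ e ∧ p.z ∈ f ∧ e ≠ f

/-- An admissible edge w.r.t. `M`: either both endpoints are in `V(M)` and lie in two distinct
edges of `M`, or exactly one endpoint is in `V(M)`. -/
def goodEdge (M : Finset (Sym2 V)) (e : Sym2 V) : Prop :=
  (∃ u v : V, e = s(u, v) ∧ covered M u ∧ covered M v ∧ ∀ f ∈ M, ¬(u ∈ f ∧ v ∈ f)) ∨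
  (∃ u v : V, e = s(u, v) ∧ covered M u ∧ ¬ covered M v)


lemma eMatch_spec {M : Finset (Sym2 V)} {u : V} (h : covered M u) :
    eMatch M u ∈ M ∧ u ∈ eMatch M u := by
  have h' : ∃ e ∈ M, u ∈ e := h
  rw [eMatch, dif_pos h']; exact h'.choose_spec

lemma eMatch_eq {M : Finset (Sym2 V)} (hM : IsMatching M) {u : V} {f : Sym2 V}
    (hf : f ∈ M) (hu : u ∈ f) : eMatch M u = f := by
  have h : covered M u := ⟨f, hf, hu⟩
  obtain ⟨h1, h2⟩ := eMatch_spec h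
  by_contra hne
  exact hM.2 _ h1 _ hf hne u h2 hu

lemma P3.card_verts (p : P3 V) : p.verts.card = 3 := by
  have h1 := p.hxy; have h2 := p.hyz; have h3 := p.hxz
  rw [P3.verts, Finset.card_insert_of_notMem (by simp [h1, h3]),
    Finset.card_insert_of_notMem (by simp [h2]), Finset.card_singleton]

lemma cost_mk (w : Sym2 V → ℝ) (M : Finset (Sym2 V)) (u v : V) :
    cost w M s(u, v) = if covered M u ∧ covered M v then
      w s(u, v) - min (w (eMatch M u)) (w (eMatch M v)) else w s(u, v) := by
  rw [cost, Sym2.lift_mk]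

lemma wt_nonneg {w : Sym2 V → ℝ} (hw : ∀ e, 0 ≤ w e) (p : P3 V) : 0 ≤ p.wt w :=
  add_nonneg (hw _) (hw _)

lemma fill (S : Finset V) (hdvd : 3 ∣ S.card) :
    ∃ Q : Finset (P3 V),
      (∀ p ∈ Q, ∀ q ∈ Q, p ≠ q → Disjoint p.verts q.verts) ∧
      Q.biUnion P3.verts = S := by
  induction S using Finset.strongInduction with
  | _ S ih =>
    rcases S.eq_empty_or_nonempty with rfl | ⟨x, hx⟩
    · exact ⟨∅, by simp, by simp⟩
    · have hc3 : 3 ≤ S.card := by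
        rcases hdvd with ⟨k, hk⟩
        have : 0 < S.card := Finset.card_pos.mpr ⟨x, hx⟩
        omega
      have hy : ∃ y, y ∈ S.erase x := by
        apply Finset.Nonempty.exists_mem
        rw [← Finset.card_pos, Finset.card_erase_of_mem hx]; omega
      obtain ⟨y, hy⟩ := hy
      have hz : ∃ z, z ∈ (S.erase x).erase y := by
        apply Finset.Nonempty.exists_mem
        rw [← Finset.card_pos, Finset.card_erase_of_mem hy,
          Finset.card_erase_of_mem hx]; omega
      obtain ⟨z, hz⟩ := hz
      have hyx : y ≠ x := Finset.ne_of_mem_erase hy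
      have hzy : z ≠ y := Finset.ne_of_mem_erase hz
      have hzx : z ≠ x := Finset.ne_of_mem_erase (Finset.mem_of_mem_erase hz)
      have hyS : y ∈ S := Finset.mem_of_mem_erase hy
      have hzS : z ∈ S := Finset.mem_of_mem_erase (Finset.mem_of_mem_erase hz)
      set p : P3 V := ⟨x, y, z, hyx.symm, hzy.symm, hzx.symm⟩ with hp
      have hpv : p.verts ⊆ S := by
        intro a ha
        simp only [P3.verts, Finset.mem_insert, Finset.mem_singleton, hp] at ha
        rcases ha with rfl | rfl | rfl <;> assumption
      have hScard : (S \ p.verts).card = S.card - 3 := by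
        rw [Finset.card_sdiff_of_subset hpv, p.card_verts]
      have hssub : S \ p.verts ⊂ S := by
        apply Finset.sdiff_ssubset (by exact_mod_cast hpv) ⟨x, by simp [hp, P3.verts]⟩
      have hdvd' : 3 ∣ (S \ p.verts).card := by
        rw [hScard]; exact Nat.dvd_sub hdvd (by norm_num)
      obtain ⟨Q', hQ'disj, hQ'cov⟩ := ih _ hssub hdvd'
      have hxnot : x ∉ S \ p.verts := by simp [hp, P3.verts]
      have hpQ' : p ∉ Q' := by
        intro hmem
        have : p.verts ⊆ S \ p.verts := by
          rw [← hQ'cov]; intro a ha; exact Finset.mem_biUnion.mpr ⟨p, hmem, ha⟩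
        exact hxnot (this (by simp [hp, P3.verts]))
      refine ⟨insert p Q', ?_, ?_⟩
      · intro a ha b hb hab
        rcases Finset.mem_insert.mp ha with rfl | ha' <;>
          rcases Finset.mem_insert.mp hb with rfl | hb'
        · exact absurd rfl hab
        · have : b.verts ⊆ S \ p.verts := by
            rw [← hQ'cov]; intro c hc; exact Finset.mem_biUnion.mpr ⟨b, hb', hc⟩
          exact Finset.disjoint_left.mpr fun c hc hcb =>
            (Finset.mem_sdiff.mp (this hcb)).2 hc
        · have : a.verts ⊆ S \ p.verts := by
            rw [← hQ'cov]; intro c hc; exact Finset.mem_biUnion.mpr ⟨a, ha', hc⟩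
          exact Finset.disjoint_left.mpr fun c hc hcb =>
            (Finset.mem_sdiff.mp (this hc)).2 hcb
        · exact hQ'disj a ha' b hb' hab
      · rw [Finset.biUnion_insert, hQ'cov]
        rw [Finset.union_sdiff_of_subset hpv]

lemma otherEnd {M : Finset (Sym2 V)} (hM : IsMatching M) {u : V} (hu : covered M u) :
    ∃ u' : V, s(u, u') = eMatch M u ∧ u' ∈ eMatch M u ∧ u' ≠ u ∧ covered M u' := by
  obtain ⟨hfM, huf⟩ := eMatch_spec hu
  refine ⟨Sym2.Mem.other huf, Sym2.other_spec huf, Sym2.other_mem huf,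
    Sym2.other_ne (hM.1 _ hfM) huf, ⟨_, hfM, Sym2.other_mem huf⟩⟩

lemma perEdgeB (w : Sym2 V → ℝ) {M : Finset (Sym2 V)} (hM : IsMatching M)
    {u v : V} (hu : covered M u) (hv : covered M v)
    (hsep : ∀ f ∈ M, ¬(u ∈ f ∧ v ∈ f))
    (hle : w (eMatch M v) ≤ w (eMatch M u)) :
    ∃ p : P3 V,
      (ew w (M.filter fun f => shares f s(u, v)) + cost w M s(u, v) ≤ p.wt w) ∧
      ∀ a ∈ p.verts, (covered M a ∧ shares (eMatch M a) s(u, v)) ∨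
        (¬ covered M a ∧ a ∈ s(u, v)) := by
  obtain ⟨hfM, huf⟩ := eMatch_spec hu
  obtain ⟨hgM, hvg⟩ := eMatch_spec hv
  have hfg : eMatch M u ≠ eMatch M v := by
    intro hEq; exact hsep _ hfM ⟨huf, hEq ▸ hvg⟩
  have huv : u ≠ v := by rintro rfl; exact hsep _ hfM ⟨huf, huf⟩
  obtain ⟨u', hspec, hu'f, hu'u, hu'cov⟩ := otherEnd hM hu
  have hvf : v ∉ eMatch M u := fun hvf => hfg (by rw [eMatch_eq hM hfM hvf])
  have hu'v : u' ≠ v := fun h => hvf (h ▸ hu'f)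
  refine ⟨⟨u', u, v, hu'u, huv, hu'v⟩, ?_, ?_⟩
  · have hfilter : (M.filter fun h => shares h s(u, v)) = {eMatch M u, eMatch M v} := by
      ext h
      simp only [Finset.mem_filter, Finset.mem_insert, Finset.mem_singleton]
      constructor
      · rintro ⟨hhM, a, hah, hauv⟩
        rw [Sym2.mem_iff] at hauv
        rcases hauv with rfl | rfl
        · exact Or.inl (eMatch_eq hM hhM hah).symm
        · exact Or.inr (eMatch_eq hM hhM hah).symm
      · rintro (rfl | rfl)
        · exact ⟨hfM, u, huf, by simp⟩
        · exact ⟨hgM, v, hvg, by simp⟩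
    rw [hfilter, ew, Finset.sum_pair hfg, cost_mk, if_pos ⟨hu, hv⟩,
      min_eq_right hle]
    have hwf : w s(u', u) = w (eMatch M u) := by rw [Sym2.eq_swap, hspec]
    rw [P3.wt, hwf]
    ring_nf
    linarith
  · intro a ha
    simp only [P3.verts, Finset.mem_insert, Finset.mem_singleton] at ha
    rcases ha with rfl | rfl | rfl
    · exact Or.inl ⟨hu'cov, u, (eMatch_eq hM hfM hu'f).symm ▸ huf, by simp⟩
    · exact Or.inl ⟨hu, a, huf, by simp⟩
    · exact Or.inl ⟨hv, a, hvg, by simp⟩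

lemma perEdge (w : Sym2 V → ℝ) {M : Finset (Sym2 V)} (hM : IsMatching M)
    {e : Sym2 V} (hg : goodEdge M e) :
    ∃ p : P3 V,
      (ew w (M.filter fun f => shares f e) + cost w M e ≤ p.wt w) ∧
      ∀ a ∈ p.verts, (covered M a ∧ shares (eMatch M a) e) ∨
        (¬ covered M a ∧ a ∈ e) := by
  rcases hg with ⟨u, v, rfl, hu, hv, hsep⟩ | ⟨u, v, rfl, hu, hv⟩
  · rcases le_total (w (eMatch M v)) (w (eMatch M u)) with hle | hle
    · exact perEdgeB w hM hu hv hsep hle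
    · rw [Sym2.eq_swap]
      exact perEdgeB w hM hv hu (fun f hf h => hsep f hf ⟨h.2, h.1⟩) hle
  · obtain ⟨hfM, huf⟩ := eMatch_spec hu
    obtain ⟨u', hspec, hu'f, hu'u, hu'cov⟩ := otherEnd hM hu
    have huv : u ≠ v := by rintro rfl; exact hv hu
    have hu'v : u' ≠ v := by rintro rfl; exact hv hu'cov
    refine ⟨⟨u', u, v, hu'u, huv, hu'v⟩, ?_, ?_⟩
    · have hfilter : (M.filter fun h => shares h s(u, v)) = {eMatch M u} := by
        ext h
        simp only [Finset.mem_filter, Finset.mem_singleton]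
        constructor
        · rintro ⟨hhM, a, hah, hauv⟩
          rw [Sym2.mem_iff] at hauv
          rcases hauv with rfl | rfl
          · exact (eMatch_eq hM hhM hah).symm
          · exact absurd ⟨h, hhM, hah⟩ hv
        · rintro rfl
          exact ⟨hfM, u, huf, by simp⟩
      rw [hfilter, ew, Finset.sum_singleton, cost_mk,
        if_neg (fun h => hv h.2)]
      have hwf : w s(u', u) = w (eMatch M u) := by rw [Sym2.eq_swap, hspec]
      rw [P3.wt, hwf]
    · intro a ha
      simp only [P3.verts, Finset.mem_insert, Finset.mem_singleton] at ha
      rcases ha with rfl | rfl | rfl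
      · exact Or.inl ⟨hu'cov, u, (eMatch_eq hM hfM hu'f).symm ▸ huf, by simp⟩
      · exact Or.inl ⟨hu, a, huf, by simp⟩
      · exact Or.inr ⟨hv, by simp⟩
theorem statement_5 (n : ℕ) (hn : Fintype.card V = n) (h3 : 3 ∣ n)
    (w : Sym2 V → ℝ) (hw : ∀ e : Sym2 V, 0 ≤ w e)
    (M : Finset (Sym2 V)) (hM : IsMatching M) (hMcard : M.card = n / 3)
    (N : Finset (Sym2 V)) (hNgood : ∀ e ∈ N, goodEdge M e)
    (hNsep : ∀ f ∈ M, ∀ e₁ ∈ N, ∀ e₂ ∈ N, shares f e₁ → shares f e₂ → e₁ = e₂)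
    (hNout : ∀ e₁ ∈ N, ∀ e₂ ∈ N, e₁ ≠ e₂ → ∀ v : V, v ∈ e₁ → v ∈ e₂ → covered M v)
    (hNall : ∀ f ∈ M, ∃ e ∈ N, shares f e) :
    ∃ P : Finset (P3 V), IsPacking P ∧ ew w M + cw w M N ≤ pw w P := by
  classical
  have key : ∀ e : {e // e ∈ N}, ∃ p : P3 V,
      (ew w (M.filter fun f => shares f e.1) + cost w M e.1 ≤ p.wt w) ∧
      ∀ a ∈ p.verts, (covered M a ∧ shares (eMatch M a) e.1) ∨ (¬ covered M a ∧ a ∈ e.1) :=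
    fun e => perEdge w hM (hNgood e.1 e.2)
  choose g hg1 hg2 using key
  -- pairwise disjointness of the constructed paths
  have hdisj : ∀ e₁ e₂ : {e // e ∈ N}, e₁ ≠ e₂ → Disjoint (g e₁).verts (g e₂).verts := by
    intro e₁ e₂ hne
    have hne' : e₁.1 ≠ e₂.1 := fun h => hne (Subtype.ext h)
    rw [Finset.disjoint_left]
    intro a ha1 ha2
    rcases hg2 e₁ a ha1 with ⟨hc, hs1⟩ | ⟨hnc, hm1⟩ <;>
      rcases hg2 e₂ a ha2 with ⟨hc', hs2⟩ | ⟨hnc', hm2⟩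
    · exact hne' (hNsep _ (eMatch_spec hc).1 _ e₁.2 _ e₂.2 hs1 hs2)
    · exact hnc' hc
    · exact hnc hc'
    · exact hnc (hNout _ e₁.2 _ e₂.2 hne' a hm1 hm2)
  have hinj : ∀ e₁ ∈ N.attach, ∀ e₂ ∈ N.attach, g e₁ = g e₂ → e₁ = e₂ := by
    intro e₁ _ e₂ _ hEq
    by_contra hne
    have hd := hdisj e₁ e₂ hne
    rw [hEq, Finset.disjoint_self_iff_empty] at hd
    have hx : (g e₂).x ∈ (g e₂).verts := by simp [P3.verts]
    rw [hd] at hx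
    exact absurd hx (Finset.notMem_empty _)
  set P0 : Finset (P3 V) := N.attach.image g with hP0
  have hP0disj : ∀ p ∈ P0, ∀ q ∈ P0, p ≠ q → Disjoint p.verts q.verts := by
    intro p hp q hq hpq
    obtain ⟨e₁, h₁, rfl⟩ := Finset.mem_image.mp hp
    obtain ⟨e₂, h₂, rfl⟩ := Finset.mem_image.mp hq
    exact hdisj e₁ e₂ (fun h => hpq (h ▸ rfl))
  -- weight bound for P0
  have hMU : M = N.biUnion (fun e => M.filter fun f => shares f e) := by
    ext f
    simp only [Finset.mem_biUnion, Finset.mem_filter]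
    constructor
    · intro hf; obtain ⟨e, he, hs⟩ := hNall f hf; exact ⟨e, he, hf, hs⟩
    · rintro ⟨e, -, hf, -⟩; exact hf
  have hfibdisj : ∀ e₁ ∈ N, ∀ e₂ ∈ N, e₁ ≠ e₂ →
      Disjoint (M.filter fun f => shares f e₁) (M.filter fun f => shares f e₂) := by
    intro e₁ h₁ e₂ h₂ hne
    rw [Finset.disjoint_left]
    intro f hf1 hf2
    rw [Finset.mem_filter] at hf1 hf2
    exact hne (hNsep f hf1.1 _ h₁ _ h₂ hf1.2 hf2.2)
  have hewM : ew w M = ∑ e ∈ N, ew w (M.filter fun f => shares f e) := by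
    unfold ew
    conv_lhs => rw [hMU]
    exact Finset.sum_biUnion fun e₁ h₁ e₂ h₂ hne => hfibdisj e₁ h₁ e₂ h₂ hne
  have hwtP0 : ew w M + cw w M N ≤ pw w P0 := by
    rw [hewM, cw, ← Finset.sum_add_distrib, pw, hP0, Finset.sum_image hinj,
      ← Finset.sum_attach N (fun e => ew w (M.filter fun f => shares f e) + cost w M e)]
    exact Finset.sum_le_sum fun e _ => hg1 e
  -- the uncovered rest
  set T : Finset V := P0.biUnion P3.verts with hT
  have hTcard : T.card = 3 * P0.card := by
    rw [hT, Finset.card_biUnion hP0disj]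
    rw [Finset.sum_congr rfl fun p _ => p.card_verts, Finset.sum_const, smul_eq_mul,
      Nat.mul_comm]
  have hTsub : T ⊆ Finset.univ := Finset.subset_univ T
  have hSdvd : 3 ∣ (Finset.univ \ T).card := by
    rw [Finset.card_sdiff_of_subset hTsub, Finset.card_univ, hn, hTcard]
    exact Nat.dvd_sub h3 ⟨P0.card, rfl⟩
  obtain ⟨Q, hQdisj, hQcov⟩ := fill (Finset.univ \ T) hSdvd
  have hQT : ∀ q ∈ Q, ∀ a ∈ q.verts, a ∉ T := by
    intro q hq a ha
    have : a ∈ Finset.univ \ T := by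
      rw [← hQcov]; exact Finset.mem_biUnion.mpr ⟨q, hq, ha⟩
    exact (Finset.mem_sdiff.mp this).2
  have hQP0 : ∀ q ∈ Q, q ∉ P0 := by
    intro q hq hqP0
    exact hQT q hq q.x (by simp [P3.verts]) (Finset.mem_biUnion.mpr ⟨q, hqP0, by simp [P3.verts]⟩)
  have hPQdisj : Disjoint P0 Q := by
    rw [Finset.disjoint_right]; exact fun q hq hqP0 => hQP0 q hq hqP0
  refine ⟨P0 ∪ Q, ⟨?_, ?_, ?_⟩, ?_⟩
  · -- cardinality
    have hcross : ∀ p ∈ P0 ∪ Q, ∀ q ∈ P0 ∪ Q, p ≠ q → Disjoint p.verts q.verts := by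
      intro p hp q hq hpq
      rcases Finset.mem_union.mp hp with hp' | hp' <;>
        rcases Finset.mem_union.mp hq with hq' | hq'
      · exact hP0disj p hp' q hq' hpq
      · exact Finset.disjoint_left.mpr fun a hap haq =>
          hQT q hq' a haq (Finset.mem_biUnion.mpr ⟨p, hp', hap⟩)
      · exact Finset.disjoint_right.mpr fun a hap haq =>
          hQT p hp' a haq (Finset.mem_biUnion.mpr ⟨q, hq', hap⟩)
      · exact hQdisj p hp' q hq' hpq
    have hcover : (P0 ∪ Q).biUnion P3.verts = Finset.univ := by
      ext a
      simp only [Finset.mem_biUnion, Finset.mem_union, Finset.mem_univ, iff_true]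
      by_cases hv : a ∈ T
      · obtain ⟨p, hp, hvp⟩ := Finset.mem_biUnion.mp hv
        exact ⟨p, Or.inl hp, hvp⟩
      · have ha : a ∈ Finset.univ \ T := Finset.mem_sdiff.mpr ⟨Finset.mem_univ a, hv⟩
        rw [← hQcov] at ha
        obtain ⟨q, hq, hvq⟩ := Finset.mem_biUnion.mp ha
        exact ⟨q, Or.inr hq, hvq⟩
    have : 3 * (P0 ∪ Q).card = n := by
      have h1 : ((P0 ∪ Q).biUnion P3.verts).card = ∑ p ∈ P0 ∪ Q, p.verts.card :=
        Finset.card_biUnion hcross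
      rw [hcover, Finset.card_univ, hn] at h1
      rw [Finset.sum_congr rfl fun p _ => p.card_verts, Finset.sum_const, smul_eq_mul] at h1
      omega
    rw [hn]; omega
  · intro p hp q hq hpq
    rcases Finset.mem_union.mp hp with hp' | hp' <;>
      rcases Finset.mem_union.mp hq with hq' | hq'
    · exact hP0disj p hp' q hq' hpq
    · exact Finset.disjoint_left.mpr fun a hap haq =>
        hQT q hq' a haq (Finset.mem_biUnion.mpr ⟨p, hp', hap⟩)
    · exact Finset.disjoint_right.mpr fun a hap haq =>
        hQT p hp' a haq (Finset.mem_biUnion.mpr ⟨q, hq', hap⟩)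
    · exact hQdisj p hp' q hq' hpq
  · intro v
    by_cases hv : v ∈ T
    · obtain ⟨p, hp, hvp⟩ := Finset.mem_biUnion.mp hv
      exact ⟨p, Finset.mem_union_left _ hp, hvp⟩
    · have : v ∈ Finset.univ \ T := Finset.mem_sdiff.mpr ⟨Finset.mem_univ v, hv⟩
      rw [← hQcov] at this
      obtain ⟨q, hq, hvq⟩ := Finset.mem_biUnion.mp this
      exact ⟨q, Finset.mem_union_right _ hq, hvq⟩
  · calc ew w M + cw w M N ≤ pw w P0 := hwtP0
      _ ≤ pw w P0 + pw w Q := le_add_of_nonneg_right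
          (Finset.sum_nonneg fun p _ => wt_nonneg hw p)
      _ = pw w (P0 ∪ Q) := by rw [pw, pw, pw, ← Finset.sum_union hPQdisj]

end MW3PP
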